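/- Let F = F_r(r,z) e_r + F_z(r,z) e_z be a C¹ axisymmetric vector field on ℝ³ belonging to L²(ℝ³;ℝ³) and divergence-free, i.e. (1/r)∂_r(r F_r) + ∂_z F_z = 0. Then there exists an axisymmetric function B_θ ∈ V¹ such that F_r = −∂_z B_θ and F_z = (1/r)∂_r(r B_θ); moreover ‖B_θ‖²_{V¹} = ‖F‖²_{L²(ℝ³)}. -/

import Mathlib

open MeasureTheory Real Set

noncomputable section

namespace VM3

/-- the half-plane `{(r,z) : r > 0}` of cylindrical coordinates. -/
def halfPlane : Set (ℝ × ℝ) := Ioi (0:ℝ) ×ˢ (univ : Set ℝ)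

/-- test functions: smooth and compactly supported in the open half-plane `{r > 0}`. -/
structure IsTestRZ (θ : ℝ × ℝ → ℝ) : Prop where
  smooth : ContDiff ℝ (⊤ : ℕ∞) θ
  cpt : HasCompactSupport θ
  supp : tsupport θ ⊆ halfPlane

/-- `h ∈ V¹`: an axisymmetric function `h(r,z)` (identified with the function
`h(r,z)` on the half-plane) whose weak derivatives `g₁ = (1/r)∂_r(rh)` and
`g₂ = ∂_z h` are square-integrable against the cylindrical measure `r dr dz`;
then `‖h‖²_{V¹} = 2π ∫ (g₁² + g₂²) r dr dz = ‖∇(h e^{iθ})‖²_{L²(ℝ³)}`. -/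
def IsV1 (h g₁ g₂ : ℝ × ℝ → ℝ) : Prop :=
  AEStronglyMeasurable h volume ∧
  AEStronglyMeasurable g₁ volume ∧ AEStronglyMeasurable g₂ volume ∧
  LocallyIntegrableOn (fun p => h p * p.1) halfPlane volume ∧
  IntegrableOn (fun p => (g₁ p ^ 2 + g₂ p ^ 2) * p.1) halfPlane ∧
  ∀ θ : ℝ × ℝ → ℝ, IsTestRZ θ →
    ((∫ p in halfPlane, g₁ p * θ p * p.1)
        = - ∫ p in halfPlane, h p * fderiv ℝ θ p (1, 0) * p.1) ∧
    ((∫ p in halfPlane, g₂ p * θ p * p.1)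
        = - ∫ p in halfPlane, h p * fderiv ℝ θ p (0, 1) * p.1)

/-- the squared `V¹` norm, computed from the weak-derivative representatives. -/
def V1normSq (g₁ g₂ : ℝ × ℝ → ℝ) : ℝ :=
  (2 * π) * ∫ p in halfPlane, (g₁ p ^ 2 + g₂ p ^ 2) * p.1


/-- the rotation of `ℝ³` about the `z`-axis by angle `φ`. -/
def rot (φ : ℝ) (x : ℝ × ℝ × ℝ) : ℝ × ℝ × ℝ :=
  (Real.cos φ * x.1 - Real.sin φ * x.2.1,
   Real.sin φ * x.1 + Real.cos φ * x.2.1, x.2.2)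

section Aux
variable (F : ℝ × ℝ × ℝ → ℝ × ℝ × ℝ)

def f1 : ℝ × ℝ → ℝ := fun p => (F (p.1, 0, p.2)).1
def f2 : ℝ × ℝ → ℝ := fun p => (F (p.1, 0, p.2)).2.1
def f3 : ℝ × ℝ → ℝ := fun p => (F (p.1, 0, p.2)).2.2
def d3 : ℝ × ℝ → ℝ := fun p => (fderiv ℝ F (p.1, 0, p.2) (0, 0, 1)).2.2
def AA : ℝ × ℝ → ℝ := fun p => ∫ s in (0:ℝ)..p.1, s * f3 F (s, p.2)
def Bt : ℝ × ℝ → ℝ := fun p => AA F p / p.1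

variable {F}

lemma cont_f1 (hC1 : ContDiff ℝ 1 F) : Continuous (f1 F) := by
  have : Continuous F := hC1.continuous
  unfold f1
  fun_prop

lemma cont_f3 (hC1 : ContDiff ℝ 1 F) : Continuous (f3 F) := by
  have : Continuous F := hC1.continuous
  unfold f3
  fun_prop

lemma cont_d3 (hC1 : ContDiff ℝ 1 F) : Continuous (d3 F) := by
  have h : Continuous (fderiv ℝ F) := hC1.continuous_fderiv one_ne_zero
  have h2 : Continuous (fun x => fderiv ℝ F x (0, 0, 1) : ℝ×ℝ×ℝ → ℝ×ℝ×ℝ) := by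
    exact (ContinuousLinearMap.apply ℝ (ℝ×ℝ×ℝ) ((0:ℝ),(0:ℝ),(1:ℝ))).continuous.comp h
  unfold d3
  fun_prop

lemma hasDerivAt_line_r (z s : ℝ) :
    HasDerivAt (fun t : ℝ => (t, (0:ℝ), z)) ((1:ℝ), (0:ℝ), (0:ℝ)) s :=
  (hasDerivAt_id s).prodMk ((hasDerivAt_const s (0:ℝ)).prodMk (hasDerivAt_const s z))

lemma hasDerivAt_line_z (r s : ℝ) :
    HasDerivAt (fun t : ℝ => (r, (0:ℝ), t)) ((0:ℝ), (0:ℝ), (1:ℝ)) s :=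
  (hasDerivAt_const s r).prodMk ((hasDerivAt_const s (0:ℝ)).prodMk (hasDerivAt_id s))

lemma hasDerivAt_F_r (hC1 : ContDiff ℝ 1 F) (z s : ℝ) :
    HasDerivAt (fun t : ℝ => F (t, 0, z)) (fderiv ℝ F (s, 0, z) (1, 0, 0)) s :=
  (hC1.differentiable one_ne_zero _).hasFDerivAt.comp_hasDerivAt s (hasDerivAt_line_r z s)

lemma hasDerivAt_F_z (hC1 : ContDiff ℝ 1 F) (r s : ℝ) :
    HasDerivAt (fun t : ℝ => F (r, 0, t)) (fderiv ℝ F (r, 0, s) (0, 0, 1)) s :=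
  (hC1.differentiable one_ne_zero _).hasFDerivAt.comp_hasDerivAt s (hasDerivAt_line_z r s)

lemma hasDerivAt_f1_r (hC1 : ContDiff ℝ 1 F) (z s : ℝ) :
    HasDerivAt (fun t : ℝ => f1 F (t, z)) ((fderiv ℝ F (s, 0, z) (1, 0, 0)).1) s := by
  have h := (hasDerivAt_F_r hC1 z s)
  have := ((ContinuousLinearMap.fst ℝ ℝ (ℝ×ℝ)).hasFDerivAt).comp_hasDerivAt s h
  exact this

lemma hasDerivAt_f3_z (hC1 : ContDiff ℝ 1 F) (r s : ℝ) :
    HasDerivAt (fun t : ℝ => f3 F (r, t)) (d3 F (r, s)) s := by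
  have h := (hasDerivAt_F_z hC1 r s)
  have := (((ContinuousLinearMap.snd ℝ ℝ ℝ).comp
    (ContinuousLinearMap.snd ℝ ℝ (ℝ×ℝ))).hasFDerivAt).comp_hasDerivAt s h
  exact this

-- f2 vanishes off the axis
lemma f2_eq_zero (hnoθ : ∀ x : ℝ × ℝ × ℝ, - x.2.1 * (F x).1 + x.1 * (F x).2.1 = 0)
    {p : ℝ × ℝ} (hp : p.1 ≠ 0) : f2 F p = 0 := by
  have := hnoθ (p.1, 0, p.2)
  simp only [neg_zero, zero_mul, neg_mul] at this
  unfold f2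
  have : p.1 * (F (p.1, 0, p.2)).2.1 = 0 := by linarith
  exact (mul_eq_zero.1 this).resolve_left hp

-- f1 vanishes on the axis
lemma f1_axis (haxi : ∀ φ x, F (rot φ x) = rot φ (F x)) (z : ℝ) : f1 F (0, z) = 0 := by
  have h := haxi π (0, 0, z)
  have hrot : rot π ((0:ℝ), (0:ℝ), z) = ((0:ℝ), (0:ℝ), z) := by
    simp [rot]
  rw [hrot] at h
  have h1 : (F ((0:ℝ), (0:ℝ), z)).1 = - (F ((0:ℝ), (0:ℝ), z)).1 := by
    conv_lhs => rw [h]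
    simp [rot]
  unfold f1
  linarith



-- L5 : the middle-direction derivative via axisymmetry
lemma fderiv_middle (hC1 : ContDiff ℝ 1 F) (haxi : ∀ φ x, F (rot φ x) = rot φ (F x))
    (r z : ℝ) :
    fderiv ℝ F (r, 0, z) (0, r, 0)
      = (-(F (r,0,z)).2.1, (F (r,0,z)).1, 0) := by
  set x : ℝ × ℝ × ℝ := (r, 0, z) with hx
  -- curve φ ↦ rot φ x, derivative at 0 is (0, r, 0)
  have hcos : HasDerivAt Real.cos (-Real.sin 0) 0 := Real.hasDerivAt_cos 0
  have hsin : HasDerivAt Real.sin (Real.cos 0) 0 := Real.hasDerivAt_sin 0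
  have c1 : HasDerivAt (fun φ => rot φ x) ((0:ℝ), r, (0:ℝ)) 0 := by
    have h1 : HasDerivAt (fun φ => Real.cos φ * x.1 - Real.sin φ * x.2.1)
        (-Real.sin 0 * x.1 - Real.cos 0 * x.2.1) 0 :=
      (hcos.mul_const _).sub (hsin.mul_const _)
    have h2 : HasDerivAt (fun φ => Real.sin φ * x.1 + Real.cos φ * x.2.1)
        (Real.cos 0 * x.1 + (-Real.sin 0) * x.2.1) 0 :=
      (hsin.mul_const _).add (hcos.mul_const _)
    have h3 : HasDerivAt (fun _ : ℝ => x.2.2) (0:ℝ) 0 := hasDerivAt_const _ _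
    have := h1.prodMk (h2.prodMk h3)
    simp only [Real.sin_zero, Real.cos_zero, hx] at this ⊢
    convert this using 2 <;> norm_num [rot]
  have c2 : HasDerivAt (fun φ => rot φ (F x)) (-(F x).2.1, (F x).1, (0:ℝ)) 0 := by
    have h1 : HasDerivAt (fun φ => Real.cos φ * (F x).1 - Real.sin φ * (F x).2.1)
        (-Real.sin 0 * (F x).1 - Real.cos 0 * (F x).2.1) 0 :=
      (hcos.mul_const _).sub (hsin.mul_const _)
    have h2 : HasDerivAt (fun φ => Real.sin φ * (F x).1 + Real.cos φ * (F x).2.1)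
        (Real.cos 0 * (F x).1 + (-Real.sin 0) * (F x).2.1) 0 :=
      (hsin.mul_const _).add (hcos.mul_const _)
    have h3 : HasDerivAt (fun _ : ℝ => (F x).2.2) (0:ℝ) 0 := hasDerivAt_const _ _
    have := h1.prodMk (h2.prodMk h3)
    simp only [Real.sin_zero, Real.cos_zero] at this ⊢
    convert this using 2 <;> norm_num [rot]
  have hrot0 : rot 0 x = x := by simp [rot, hx]
  have c3 : HasDerivAt (fun φ => F (rot φ x)) (fderiv ℝ F x ((0:ℝ), r, (0:ℝ))) 0 := by
    have := ((hC1.differentiable one_ne_zero (rot 0 x)).hasFDerivAt).comp_hasDerivAt 0 c1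
    rwa [hrot0] at this
  have c4 : HasDerivAt (fun φ => F (rot φ x)) (-(F x).2.1, (F x).1, (0:ℝ)) 0 := by
    have : (fun φ => F (rot φ x)) = fun φ => rot φ (F x) := funext fun φ => haxi φ x
    rw [this]; exact c2
  exact c3.unique c4

-- cylindrical divergence identity : the radial ODE
lemma radial_ode (hC1 : ContDiff ℝ 1 F) (haxi : ∀ φ x, F (rot φ x) = rot φ (F x))
    (hnoθ : ∀ x : ℝ × ℝ × ℝ, - x.2.1 * (F x).1 + x.1 * (F x).2.1 = 0)
    (hdiv : ∀ x : ℝ × ℝ × ℝ,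
      (fderiv ℝ F x (1, 0, 0)).1 + (fderiv ℝ F x (0, 1, 0)).2.1
        + (fderiv ℝ F x (0, 0, 1)).2.2 = 0)
    (z s : ℝ) :
    HasDerivAt (fun t : ℝ => t * f1 F (t, z)) (-(s * d3 F (s, z))) s := by
  have h1 : HasDerivAt (fun t : ℝ => t * f1 F (t, z))
      (1 * f1 F (s, z) + s * (fderiv ℝ F (s, 0, z) (1, 0, 0)).1) s :=
    (hasDerivAt_id s).mul (hasDerivAt_f1_r hC1 z s)
  convert h1 using 1
  rcases eq_or_ne s 0 with rfl | hs
  · have := f1_axis haxi z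
    simp [this, d3]
  · -- use divergence + axisymmetry
    have hmid : fderiv ℝ F (s, 0, z) ((0:ℝ), (1:ℝ), (0:ℝ))
        = s⁻¹ • ((-(F (s,0,z)).2.1, (F (s,0,z)).1, (0:ℝ)) : ℝ×ℝ×ℝ) := by
      have h := fderiv_middle hC1 haxi s z
      have : ((0:ℝ), (1:ℝ), (0:ℝ)) = s⁻¹ • (((0:ℝ), s, (0:ℝ)) : ℝ×ℝ×ℝ) := by
        simp [Prod.ext_iff, smul_eq_mul, inv_mul_cancel₀ hs]
      rw [this, ContinuousLinearMap.map_smul, h]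
    have hf2 : (F ((s:ℝ),0,z)).2.1 = 0 := f2_eq_zero hnoθ (p := (s, z)) hs
    have hdivs := hdiv (s, 0, z)
    have hmid21 : (fderiv ℝ F (s, 0, z) ((0:ℝ), (1:ℝ), (0:ℝ))).2.1 = s⁻¹ * (F (s,0,z)).1 := by
      rw [hmid]; simp
    rw [hmid21] at hdivs
    have : (fderiv ℝ F ((s:ℝ), 0, z) (0, 0, 1)).2.2 = d3 F (s, z) := rfl
    rw [this] at hdivs
    have hf1 : f1 F (s, z) = (F ((s:ℝ),0,z)).1 := rfl
    field_simp [hf1] at hdivs ⊢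
    nlinarith [hdivs]


-- L8 : FTC for the radial ODE
lemma ftc_radial (hC1 : ContDiff ℝ 1 F) (haxi : ∀ φ x, F (rot φ x) = rot φ (F x))
    (hnoθ : ∀ x : ℝ × ℝ × ℝ, - x.2.1 * (F x).1 + x.1 * (F x).2.1 = 0)
    (hdiv : ∀ x : ℝ × ℝ × ℝ,
      (fderiv ℝ F x (1, 0, 0)).1 + (fderiv ℝ F x (0, 1, 0)).2.1
        + (fderiv ℝ F x (0, 0, 1)).2.2 = 0)
    (z r : ℝ) :
    (∫ s in (0:ℝ)..r, s * d3 F (s, z)) = -(r * f1 F (r, z)) := by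
  have hcont : Continuous (fun s : ℝ => -(s * d3 F (s, z))) := by
    have := cont_d3 hC1
    fun_prop
  have := intervalIntegral.integral_eq_sub_of_hasDerivAt
    (f := fun t : ℝ => t * f1 F (t, z)) (f' := fun s : ℝ => -(s * d3 F (s, z)))
    (fun x _ => radial_ode hC1 haxi hnoθ hdiv z x) (hcont.intervalIntegrable 0 r)
  rw [intervalIntegral.integral_neg] at this
  simp only [zero_mul, sub_zero] at this
  linarith [this]

-- derivative of AA in r (FTC, valid at every r)
lemma hasDerivAt_AA_r (hC1 : ContDiff ℝ 1 F) (z r : ℝ) :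
    HasDerivAt (fun t : ℝ => AA F (t, z)) (r * f3 F (r, z)) r := by
  have hc : Continuous (fun s : ℝ => s * f3 F (s, z)) := by
    have := cont_f3 hC1
    fun_prop
  have := intervalIntegral.integral_hasDerivAt_right
    (hc.intervalIntegrable 0 r)
    (hc.stronglyMeasurableAtFilter volume (nhds r))
    hc.continuousAt
  simpa [AA] using this

-- derivative of AA in z (differentiation under the integral sign)
lemma hasDerivAt_AA_z (hC1 : ContDiff ℝ 1 F) (haxi : ∀ φ x, F (rot φ x) = rot φ (F x))
    (hnoθ : ∀ x : ℝ × ℝ × ℝ, - x.2.1 * (F x).1 + x.1 * (F x).2.1 = 0)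
    (hdiv : ∀ x : ℝ × ℝ × ℝ,
      (fderiv ℝ F x (1, 0, 0)).1 + (fderiv ℝ F x (0, 1, 0)).2.1
        + (fderiv ℝ F x (0, 0, 1)).2.2 = 0)
    (r z : ℝ) :
    HasDerivAt (fun t : ℝ => AA F (r, t)) (-(r * f1 F (r, z))) z := by
  have hf3 : Continuous (f3 F) := cont_f3 hC1
  have hd3 : Continuous (d3 F) := cont_d3 hC1
  -- bound on the compact set uIcc 0 r × closedBall z 1
  obtain ⟨C, hC⟩ : ∃ C, ∀ q ∈ (Set.uIcc (0:ℝ) r) ×ˢ (Metric.closedBall z 1),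
      ‖q.1 * d3 F q‖ ≤ C := by
    have hcompact : IsCompact ((Set.uIcc (0:ℝ) r) ×ˢ (Metric.closedBall z 1)) :=
      isCompact_uIcc.prod (isCompact_closedBall _ _)
    exact hcompact.exists_bound_of_continuousOn (by fun_prop)
  have hmeas : ∀ᶠ t in nhds z, AEStronglyMeasurable (fun s : ℝ => s * f3 F (s, t))
      (volume.restrict (Set.uIoc (0:ℝ) r)) :=
    Filter.Eventually.of_forall fun t =>
      (Continuous.aestronglyMeasurable (by fun_prop)).restrict
  have hint : IntervalIntegrable (fun s : ℝ => s * f3 F (s, z)) volume 0 r :=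
    (by fun_prop : Continuous (fun s : ℝ => s * f3 F (s, z))).intervalIntegrable 0 r
  have hmeas' : AEStronglyMeasurable (fun s : ℝ => s * d3 F (s, z))
      (volume.restrict (Set.uIoc (0:ℝ) r)) :=
    (Continuous.aestronglyMeasurable (by fun_prop)).restrict
  have hbound : ∀ᵐ s ∂(volume : Measure ℝ), s ∈ Set.uIoc (0:ℝ) r →
      ∀ t ∈ Metric.ball z 1, ‖s * d3 F (s, t)‖ ≤ C :=
    Filter.Eventually.of_forall fun s hs t ht =>
      hC (s, t) ⟨Set.uIoc_subset_uIcc hs, Metric.ball_subset_closedBall ht⟩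
  have hdiff : ∀ᵐ s ∂(volume : Measure ℝ), s ∈ Set.uIoc (0:ℝ) r →
      ∀ t ∈ Metric.ball z 1, HasDerivAt (fun t' : ℝ => s * f3 F (s, t')) (s * d3 F (s, t)) t :=
    Filter.Eventually.of_forall fun s _ t _ => (hasDerivAt_f3_z hC1 s t).const_mul s
  have key := (intervalIntegral.hasDerivAt_integral_of_dominated_loc_of_deriv_le
    (𝕜 := ℝ) (μ := volume) (F := fun (t : ℝ) (s : ℝ) => s * f3 F (s, t))
    (F' := fun (t : ℝ) (s : ℝ) => s * d3 F (s, t)) (x₀ := z) (a := 0) (b := r)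
    (bound := fun _ => C) (Metric.ball_mem_nhds z one_pos) hmeas hint hmeas' hbound
    intervalIntegrable_const hdiff)
  have h2 := key.2
  rw [ftc_radial hC1 haxi hnoθ hdiv z r] at h2
  exact h2

-- continuity of AA
set_option maxHeartbeats 1000000 in
lemma cont_AA (hC1 : ContDiff ℝ 1 F) : Continuous (AA F) := by
  have hf3 : Continuous (f3 F) := cont_f3 hC1
  have h : Continuous fun q : ℝ × ℝ => ∫ t in (0:ℝ)..q.2, (fun (z s : ℝ) => s * f3 F (s, z)) q.1 t :=
    intervalIntegral.continuous_parametric_primitive_of_continuous (μ := volume)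
      (by fun_prop : Continuous (Function.uncurry fun (t : ℝ) (s : ℝ) => s * f3 F (s, t)))
  have h3 := h.comp (continuous_snd.prodMk continuous_fst)
  exact h3.congr fun p => rfl

-- integration by parts on ℝ against a compactly supported function
lemma ibp_line {u v u' v' : ℝ → ℝ} (hu : ∀ t, HasDerivAt u (u' t) t)
    (hv : ∀ t, HasDerivAt v (v' t) t) (hu'c : Continuous u') (hv'c : Continuous v')
    (hsupp : HasCompactSupport v) :
    ∫ t, u' t * v t = - ∫ t, u t * v' t := by
  have hucont : Continuous u := continuous_iff_continuousAt.2 fun t => (hu t).continuousAt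
  have hvcont : Continuous v := continuous_iff_continuousAt.2 fun t => (hv t).continuousAt
  obtain ⟨R, hR⟩ : ∃ R, tsupport v ⊆ Metric.ball (0:ℝ) R := by
    obtain ⟨R, hR⟩ := hsupp.isBounded.subset_ball 0
    exact ⟨R, hR⟩
  set b : ℝ := max R 1 with hb
  have hbpos : (0:ℝ) < b := lt_of_lt_of_le one_pos (le_max_right _ _)
  have hsub : tsupport v ⊆ Set.Ioo (-b) b := by
    intro x hx
    have := hR hx
    rw [Real.ball_eq_Ioo] at this
    have h1 : -R < x := by simpa using this.1
    have h2 : x < R := by simpa using this.2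
    constructor
    · have : R ≤ b := le_max_left _ _
      linarith
    · have : R ≤ b := le_max_left _ _
      linarith
  have hv0 : ∀ t, t ∉ Set.Ioo (-b) b → v t = 0 := fun t ht =>
    image_eq_zero_of_notMem_tsupport (fun hmem => ht (hsub hmem))
  have hv'0 : ∀ t, t ∉ Set.Ioo (-b) b → v' t = 0 := by
    intro t ht
    have hopen : IsOpen (tsupport v)ᶜ := (isClosed_tsupport v).isOpen_compl
    have htmem : t ∈ (tsupport v)ᶜ := fun hmem => ht (hsub hmem)
    have hev : v =ᶠ[nhds t] (fun _ => (0:ℝ)) := by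
      filter_upwards [hopen.mem_nhds htmem] with x hx
      exact image_eq_zero_of_notMem_tsupport hx
    have : deriv v t = deriv (fun _ => (0:ℝ)) t := hev.deriv_eq
    rw [(hv t).deriv] at this
    simpa using this
  -- reduce to interval integrals
  have hle : (-b) ≤ b := by linarith
  have e1 : ∫ t, u' t * v t = ∫ t in (-b)..b, u' t * v t := by
    rw [intervalIntegral.integral_of_le hle,
      ← MeasureTheory.setIntegral_eq_integral_of_forall_compl_eq_zero
        (s := Set.Ioc (-b) b) (f := fun t => u' t * v t)]
    intro x hx
    have : x ∉ Set.Ioo (-b) b := fun h => hx ⟨h.1, h.2.le⟩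
    rw [hv0 x this, mul_zero]
  have e2 : ∫ t, u t * v' t = ∫ t in (-b)..b, u t * v' t := by
    rw [intervalIntegral.integral_of_le hle,
      ← MeasureTheory.setIntegral_eq_integral_of_forall_compl_eq_zero
        (s := Set.Ioc (-b) b) (f := fun t => u t * v' t)]
    intro x hx
    have : x ∉ Set.Ioo (-b) b := fun h => hx ⟨h.1, h.2.le⟩
    rw [hv'0 x this, mul_zero]
  have hvb : v b = 0 := hv0 b (by intro h; exact absurd h.2 (lt_irrefl b))
  have hvnb : v (-b) = 0 := hv0 (-b) (by intro h; exact absurd h.1 (lt_irrefl (-b)))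
  have ibp := intervalIntegral.integral_mul_deriv_eq_deriv_mul
    (u := u) (v := v) (u' := u') (v' := v') (a := -b) (b := b)
    (fun x _ => hu x) (fun x _ => hv x)
    (hu'c.intervalIntegrable _ _) (hv'c.intervalIntegrable _ _)
  rw [e1, e2, ibp, hvb, hvnb]
  ring

lemma measurableSet_halfPlane : MeasurableSet halfPlane :=
  measurableSet_Ioi.prod MeasurableSet.univ

lemma theta_zero_off {θ : ℝ × ℝ → ℝ} (hθ : IsTestRZ θ) {p : ℝ × ℝ}
    (hp : p ∉ halfPlane) : θ p = 0 :=
  image_eq_zero_of_notMem_tsupport (fun hmem => hp (hθ.supp hmem))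

lemma fderiv_theta_zero_off {θ : ℝ × ℝ → ℝ} (hθ : IsTestRZ θ) {p : ℝ × ℝ}
    (hp : p ∉ halfPlane) (w : ℝ × ℝ) : fderiv ℝ θ p w = 0 := by
  have : p ∉ Function.support (fderiv ℝ θ) :=
    fun h => hp (hθ.supp (support_fderiv_subset ℝ h))
  rw [Function.notMem_support.1 this]
  rfl

lemma cont_fderiv_theta {θ : ℝ × ℝ → ℝ} (hθ : IsTestRZ θ) (w : ℝ × ℝ) :
    Continuous (fun p => fderiv ℝ θ p w) :=
  (ContinuousLinearMap.apply ℝ ℝ w).continuous.comp (hθ.smooth.continuous_fderiv (by simp))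

lemma hasDerivAt_theta_r {θ : ℝ × ℝ → ℝ} (hθ : IsTestRZ θ) (z t : ℝ) :
    HasDerivAt (fun r => θ (r, z)) (fderiv ℝ θ (t, z) (1, 0)) t := by
  have hdiff : HasFDerivAt θ (fderiv ℝ θ (t, z)) (t, z) :=
    (hθ.smooth.differentiable (by simp) (t, z)).hasFDerivAt
  have hline : HasDerivAt (fun r : ℝ => (r, z)) ((1:ℝ), (0:ℝ)) t :=
    (hasDerivAt_id t).prodMk (hasDerivAt_const t z)
  exact hdiff.comp_hasDerivAt t hline

lemma hasDerivAt_theta_z {θ : ℝ × ℝ → ℝ} (hθ : IsTestRZ θ) (r t : ℝ) :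
    HasDerivAt (fun z => θ (r, z)) (fderiv ℝ θ (r, t) (0, 1)) t := by
  have hdiff : HasFDerivAt θ (fderiv ℝ θ (r, t)) (r, t) :=
    (hθ.smooth.differentiable (by simp) (r, t)).hasFDerivAt
  have hline : HasDerivAt (fun z : ℝ => (r, z)) ((0:ℝ), (1:ℝ)) t :=
    (hasDerivAt_const t r).prodMk (hasDerivAt_id t)
  exact hdiff.comp_hasDerivAt t hline

lemma slice_cs_r {θ : ℝ × ℝ → ℝ} (hθ : IsTestRZ θ) (z : ℝ) :
    HasCompactSupport (fun r => θ (r, z)) :=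
  HasCompactSupport.intro (hθ.cpt.image continuous_fst)
    (fun r hr => by
      by_contra hne
      exact hr ⟨(r, z), subset_tsupport _ hne, rfl⟩)

lemma slice_cs_z {θ : ℝ × ℝ → ℝ} (hθ : IsTestRZ θ) (r : ℝ) :
    HasCompactSupport (fun z => θ (r, z)) :=
  HasCompactSupport.intro (hθ.cpt.image continuous_snd)
    (fun z hz => by
      by_contra hne
      exact hz ⟨(r, z), subset_tsupport _ hne, rfl⟩)

lemma cs_of_theta_factor {θ : ℝ × ℝ → ℝ} (hθ : IsTestRZ θ) {G : ℝ × ℝ → ℝ}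
    (hG : ∀ p, p ∉ tsupport θ → G p = 0) : HasCompactSupport G :=
  HasCompactSupport.intro hθ.cpt hG

-- Fubini in both orders for continuous compactly supported functions on ℝ²
lemma fubini_rz {φ : ℝ × ℝ → ℝ} (hc : Continuous φ) (hs : HasCompactSupport φ) :
    ∫ p : ℝ × ℝ, φ p = ∫ r : ℝ, ∫ z : ℝ, φ (r, z) := by
  have hInt : Integrable φ (volume : Measure (ℝ × ℝ)) := hc.integrable_of_hasCompactSupport hs
  rw [MeasureTheory.Measure.volume_eq_prod] at hInt ⊢
  exact MeasureTheory.integral_prod φ hInt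

lemma fubini_zr {φ : ℝ × ℝ → ℝ} (hc : Continuous φ) (hs : HasCompactSupport φ) :
    ∫ p : ℝ × ℝ, φ p = ∫ z : ℝ, ∫ r : ℝ, φ (r, z) := by
  have hInt : Integrable φ (volume : Measure (ℝ × ℝ)) := hc.integrable_of_hasCompactSupport hs
  rw [MeasureTheory.Measure.volume_eq_prod] at hInt ⊢
  rw [MeasureTheory.integral_prod φ hInt]
  exact MeasureTheory.integral_integral_swap (f := fun r z => φ (r, z)) hInt

-- weak identity in r
lemma weak_r (hC1 : ContDiff ℝ 1 F) {θ : ℝ × ℝ → ℝ} (hθ : IsTestRZ θ) :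
    (∫ p in halfPlane, f3 F p * θ p * p.1)
      = - ∫ p in halfPlane, Bt F p * fderiv ℝ θ p (1, 0) * p.1 := by
  have hf3 : Continuous (f3 F) := cont_f3 hC1
  have hAA : Continuous (AA F) := cont_AA hC1
  have hDr : Continuous (fun p => fderiv ℝ θ p (1, 0)) := cont_fderiv_theta hθ _
  have hθc : Continuous θ := hθ.smooth.continuous
  -- the two global integrands
  set L : ℝ × ℝ → ℝ := fun p => f3 F p * θ p * p.1 with hL
  set R : ℝ × ℝ → ℝ := fun p => AA F p * fderiv ℝ θ p (1, 0) with hRR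
  have hLc : Continuous L := by fun_prop
  have hRc : Continuous R := by fun_prop
  have hLcs : HasCompactSupport L := cs_of_theta_factor hθ (fun p hp => by
    simp [hL, image_eq_zero_of_notMem_tsupport hp])
  have hRcs : HasCompactSupport R := cs_of_theta_factor hθ (fun p hp => by
    have : fderiv ℝ θ p = 0 := by
      by_contra h
      exact hp (support_fderiv_subset ℝ h)
    simp [hRR, this])
  have e1 : (∫ p in halfPlane, f3 F p * θ p * p.1) = ∫ p : ℝ × ℝ, L p :=
    MeasureTheory.setIntegral_eq_integral_of_forall_compl_eq_zero
      (fun p hp => by simp [hL, theta_zero_off hθ hp])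
  have e2 : (∫ p in halfPlane, Bt F p * fderiv ℝ θ p (1, 0) * p.1) = ∫ p : ℝ × ℝ, R p := by
    rw [← MeasureTheory.setIntegral_eq_integral_of_forall_compl_eq_zero
      (s := halfPlane) (f := R) (fun p hp => by simp [hRR, fderiv_theta_zero_off hθ hp])]
    refine MeasureTheory.setIntegral_congr_fun measurableSet_halfPlane (fun p hp => ?_)
    have hp1 : p.1 ≠ 0 := ne_of_gt hp.1
    simp only [hRR, Bt]
    field_simp
  rw [e1, e2]
  rw [fubini_zr hLc hLcs, fubini_zr hRc hRcs]
  rw [← MeasureTheory.integral_neg]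
  refine MeasureTheory.integral_congr_ae (Filter.Eventually.of_forall (fun z => ?_))
  -- fixed z : integrate by parts in r
  have key := ibp_line (u := fun t => AA F (t, z)) (u' := fun t => t * f3 F (t, z))
    (v := fun t => θ (t, z)) (v' := fun t => fderiv ℝ θ (t, z) (1, 0))
    (fun t => hasDerivAt_AA_r hC1 z t) (fun t => hasDerivAt_theta_r hθ z t)
    (by fun_prop) (by fun_prop) (slice_cs_r hθ z)
  have lhs_eq : ∫ r : ℝ, L (r, z) = ∫ t : ℝ, (t * f3 F (t, z)) * θ (t, z) :=
    MeasureTheory.integral_congr_ae (Filter.Eventually.of_forall (fun t => by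
      simp only [hL]; ring))
  show (∫ r : ℝ, L (r, z)) = -∫ r : ℝ, R (r, z)
  rw [lhs_eq, key]

-- weak identity in z
lemma weak_z (hC1 : ContDiff ℝ 1 F) (haxi : ∀ φ x, F (rot φ x) = rot φ (F x))
    (hnoθ : ∀ x : ℝ × ℝ × ℝ, - x.2.1 * (F x).1 + x.1 * (F x).2.1 = 0)
    (hdiv : ∀ x : ℝ × ℝ × ℝ,
      (fderiv ℝ F x (1, 0, 0)).1 + (fderiv ℝ F x (0, 1, 0)).2.1
        + (fderiv ℝ F x (0, 0, 1)).2.2 = 0)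
    {θ : ℝ × ℝ → ℝ} (hθ : IsTestRZ θ) :
    (∫ p in halfPlane, (- f1 F p) * θ p * p.1)
      = - ∫ p in halfPlane, Bt F p * fderiv ℝ θ p (0, 1) * p.1 := by
  have hf1 : Continuous (f1 F) := cont_f1 hC1
  have hAA : Continuous (AA F) := cont_AA hC1
  have hDz : Continuous (fun p => fderiv ℝ θ p (0, 1)) := cont_fderiv_theta hθ _
  have hθc : Continuous θ := hθ.smooth.continuous
  set L : ℝ × ℝ → ℝ := fun p => (- f1 F p) * θ p * p.1 with hL
  set R : ℝ × ℝ → ℝ := fun p => AA F p * fderiv ℝ θ p (0, 1) with hRR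
  have hLc : Continuous L := by fun_prop
  have hRc : Continuous R := by fun_prop
  have hLcs : HasCompactSupport L := cs_of_theta_factor hθ (fun p hp => by
    simp [hL, image_eq_zero_of_notMem_tsupport hp])
  have hRcs : HasCompactSupport R := cs_of_theta_factor hθ (fun p hp => by
    have : fderiv ℝ θ p = 0 := by
      by_contra h
      exact hp (support_fderiv_subset ℝ h)
    simp [hRR, this])
  have e1 : (∫ p in halfPlane, (- f1 F p) * θ p * p.1) = ∫ p : ℝ × ℝ, L p :=
    MeasureTheory.setIntegral_eq_integral_of_forall_compl_eq_zero
      (fun p hp => by simp [hL, theta_zero_off hθ hp])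
  have e2 : (∫ p in halfPlane, Bt F p * fderiv ℝ θ p (0, 1) * p.1) = ∫ p : ℝ × ℝ, R p := by
    rw [← MeasureTheory.setIntegral_eq_integral_of_forall_compl_eq_zero
      (s := halfPlane) (f := R) (fun p hp => by simp [hRR, fderiv_theta_zero_off hθ hp])]
    refine MeasureTheory.setIntegral_congr_fun measurableSet_halfPlane (fun p hp => ?_)
    have hp1 : p.1 ≠ 0 := ne_of_gt hp.1
    simp only [hRR, Bt]
    field_simp
  rw [e1, e2]
  rw [fubini_rz hLc hLcs, fubini_rz hRc hRcs]
  rw [← MeasureTheory.integral_neg]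
  refine MeasureTheory.integral_congr_ae (Filter.Eventually.of_forall (fun r => ?_))
  have key := ibp_line (u := fun t => AA F (r, t)) (u' := fun t => -(r * f1 F (r, t)))
    (v := fun t => θ (r, t)) (v' := fun t => fderiv ℝ θ (r, t) (0, 1))
    (fun t => hasDerivAt_AA_z hC1 haxi hnoθ hdiv r t) (fun t => hasDerivAt_theta_z hθ r t)
    (by fun_prop) (by fun_prop) (slice_cs_z hθ r)
  have lhs_eq : ∫ z : ℝ, L (r, z) = ∫ t : ℝ, (-(r * f1 F (r, t))) * θ (r, t) :=
    MeasureTheory.integral_congr_ae (Filter.Eventually.of_forall (fun t => by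
      simp only [hL]; ring))
  show (∫ z : ℝ, L (r, z)) = -∫ z : ℝ, R (r, z)
  rw [lhs_eq, key]

variable (F) in
def PhiF : ℝ × ℝ × ℝ → ℝ := fun x => (F x).1 ^ 2 + (F x).2.1 ^ 2 + (F x).2.2 ^ 2

lemma Phi_rot (haxi : ∀ φ x, F (rot φ x) = rot φ (F x)) (φ : ℝ) (x : ℝ × ℝ × ℝ) :
    PhiF F (rot φ x) = PhiF F x := by
  unfold PhiF
  rw [haxi φ x]
  simp only [rot]
  linear_combination ((F x).1 ^ 2 + (F x).2.1 ^ 2) * (Real.sin_sq_add_cos_sq φ)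

lemma Phi_slice (hnoθ : ∀ x : ℝ × ℝ × ℝ, - x.2.1 * (F x).1 + x.1 * (F x).2.1 = 0)
    {r : ℝ} (hr : r ≠ 0) (z : ℝ) :
    PhiF F (r, 0, z) = f3 F (r, z) ^ 2 + (- f1 F (r, z)) ^ 2 := by
  have h2 : (F ((r:ℝ), 0, z)).2.1 = 0 := f2_eq_zero hnoθ (p := (r, z)) hr
  unfold PhiF f1 f3
  rw [h2]
  ring

-- the common iterated form
lemma lintegral_3d_eq (hC1 : ContDiff ℝ 1 F) (haxi : ∀ φ x, F (rot φ x) = rot φ (F x)) :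
    ∫⁻ x : ℝ × ℝ × ℝ, ENNReal.ofReal (PhiF F x)
      = ∫⁻ z : ℝ, ∫⁻ r in Ioi (0:ℝ),
          ENNReal.ofReal (2 * π) * (ENNReal.ofReal r * ENNReal.ofReal (PhiF F (r, 0, z))) := by
  have hPhic : Continuous (PhiF F) := by
    have := hC1.continuous
    unfold PhiF; fun_prop
  have hmeas : Measurable fun x : ℝ × ℝ × ℝ => ENNReal.ofReal (PhiF F x) :=
    ENNReal.measurable_ofReal.comp hPhic.measurable
  -- reassociate
  have step1 : ∫⁻ x : ℝ × ℝ × ℝ, ENNReal.ofReal (PhiF F x)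
      = ∫⁻ q : (ℝ × ℝ) × ℝ, ENNReal.ofReal (PhiF F (q.1.1, q.1.2, q.2)) := by
    rw [← MeasureTheory.volume_preserving_prodAssoc.lintegral_comp hmeas]
    rfl
  rw [step1]
  -- Fubini on (ℝ×ℝ) × ℝ, then swap
  have hmeas2 : Measurable fun q : (ℝ × ℝ) × ℝ => ENNReal.ofReal (PhiF F (q.1.1, q.1.2, q.2)) := by
    apply ENNReal.measurable_ofReal.comp
    apply hPhic.measurable.comp
    exact ((measurable_fst.comp measurable_fst).prodMk
      ((measurable_snd.comp measurable_fst).prodMk measurable_snd))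
  have step2 : ∫⁻ q : (ℝ × ℝ) × ℝ, ENNReal.ofReal (PhiF F (q.1.1, q.1.2, q.2))
      = ∫⁻ z : ℝ, ∫⁻ w : ℝ × ℝ, ENNReal.ofReal (PhiF F (w.1, w.2, z)) := by
    rw [MeasureTheory.Measure.volume_eq_prod, MeasureTheory.lintegral_prod _ hmeas2.aemeasurable]
    exact MeasureTheory.lintegral_lintegral_swap hmeas2.aemeasurable
  rw [step2]
  -- polar coordinates in the inner integral
  refine MeasureTheory.lintegral_congr_ae (Filter.Eventually.of_forall (fun z => ?_))
  have hinner_meas : Measurable fun w : ℝ × ℝ => ENNReal.ofReal (PhiF F (w.1, w.2, z)) := by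
    apply ENNReal.measurable_ofReal.comp
    exact hPhic.measurable.comp (measurable_fst.prodMk (measurable_snd.prodMk measurable_const))
  -- the derivative of polarCoord.symm
  set B : ℝ × ℝ → ℝ × ℝ →L[ℝ] ℝ × ℝ := fun p =>
    LinearMap.toContinuousLinearMap (Matrix.toLin (Module.Basis.finTwoProd ℝ) (Module.Basis.finTwoProd ℝ)
      !![Real.cos p.2, -p.1 * Real.sin p.2; Real.sin p.2, p.1 * Real.cos p.2]) with hB
  have hBderiv : ∀ p ∈ polarCoord.target, HasFDerivWithinAt polarCoord.symm (B p)
      polarCoord.target p := fun p _ => (hasFDerivAt_polarCoord_symm p).hasFDerivWithinAt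
  have hBdet : ∀ p, (B p).det = p.1 := by
    intro p
    conv_rhs => rw [← one_mul p.1, ← Real.cos_sq_add_sin_sq p.2]
    simp only [hB, neg_mul, LinearMap.det_toContinuousLinearMap, LinearMap.det_toLin,
      Matrix.det_fin_two_of, sub_neg_eq_add]
    ring
  have hinj : Set.InjOn polarCoord.symm polarCoord.target := polarCoord.symm.injOn
  have himg : polarCoord.symm '' polarCoord.target = polarCoord.source :=
    polarCoord.symm_image_target_eq_source
  calc ∫⁻ w : ℝ × ℝ, ENNReal.ofReal (PhiF F (w.1, w.2, z))
      = ∫⁻ w in polarCoord.source, ENNReal.ofReal (PhiF F (w.1, w.2, z)) := by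
        rw [MeasureTheory.setLIntegral_congr polarCoord_source_ae_eq_univ,
          MeasureTheory.Measure.restrict_univ]
    _ = ∫⁻ q in polarCoord.target, ENNReal.ofReal |(B q).det|
          * ENNReal.ofReal (PhiF F ((polarCoord.symm q).1, (polarCoord.symm q).2, z)) := by
        rw [← himg]
        exact MeasureTheory.lintegral_image_eq_lintegral_abs_det_fderiv_mul volume
          polarCoord.open_target.measurableSet hBderiv hinj _
    _ = ∫⁻ q in polarCoord.target, ENNReal.ofReal q.1 * ENNReal.ofReal (PhiF F (q.1, 0, z)) := by
        refine MeasureTheory.setLIntegral_congr_fun_ae polarCoord.open_target.measurableSet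
          (Filter.Eventually.of_forall (fun q hq => ?_))
        rw [hBdet q, abs_of_pos hq.1]
        congr 1
        have : ((polarCoord.symm q).1, (polarCoord.symm q).2, z) = rot q.2 (q.1, 0, z) := by
          simp [polarCoord_symm_apply, rot, mul_comm]
        rw [this, Phi_rot haxi]
    _ = ∫⁻ r in Ioi (0:ℝ),
          ENNReal.ofReal (2 * π) * (ENNReal.ofReal r * ENNReal.ofReal (PhiF F (r, 0, z))) := by
        rw [polarCoord_target, MeasureTheory.Measure.volume_eq_prod,
          ← MeasureTheory.Measure.prod_restrict, MeasureTheory.lintegral_prod]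
        · refine MeasureTheory.lintegral_congr_ae (Filter.Eventually.of_forall (fun r => ?_))
          show (∫⁻ _ in Ioo (-π) π, ENNReal.ofReal r * ENNReal.ofReal (PhiF F (r, 0, z))) = _
          rw [MeasureTheory.setLIntegral_const]
          rw [Real.volume_Ioo]
          have : π - -π = 2 * π := by ring
          rw [this]
          ring
        · apply Measurable.aemeasurable
          apply Measurable.mul (f := fun q : ℝ × ℝ => ENNReal.ofReal q.1)
            (g := fun q : ℝ × ℝ => ENNReal.ofReal (PhiF F (q.1, 0, z)))
          · exact ENNReal.measurable_ofReal.comp measurable_fst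
          · apply ENNReal.measurable_ofReal.comp
            exact hPhic.measurable.comp
              (measurable_fst.prodMk (measurable_const.prodMk measurable_const))

lemma lintegral_hp_eq (hC1 : ContDiff ℝ 1 F)
    (hnoθ : ∀ x : ℝ × ℝ × ℝ, - x.2.1 * (F x).1 + x.1 * (F x).2.1 = 0) :
    (∫⁻ p in halfPlane, ENNReal.ofReal ((f3 F p ^ 2 + (- f1 F p) ^ 2) * p.1))
      = ∫⁻ z : ℝ, ∫⁻ r in Ioi (0:ℝ), ENNReal.ofReal r * ENNReal.ofReal (PhiF F (r, 0, z)) := by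
  have hf1 : Continuous (f1 F) := cont_f1 hC1
  have hf3 : Continuous (f3 F) := cont_f3 hC1
  have hGmeas : Measurable fun p : ℝ × ℝ =>
      ENNReal.ofReal ((f3 F p ^ 2 + (- f1 F p) ^ 2) * p.1) := by
    apply ENNReal.measurable_ofReal.comp
    fun_prop
  rw [show halfPlane = Ioi (0:ℝ) ×ˢ (univ : Set ℝ) from rfl,
    MeasureTheory.Measure.volume_eq_prod, ← MeasureTheory.Measure.prod_restrict,
    MeasureTheory.Measure.restrict_univ,
    MeasureTheory.lintegral_prod _ hGmeas.aemeasurable,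
    MeasureTheory.lintegral_lintegral_swap hGmeas.aemeasurable]
  refine MeasureTheory.lintegral_congr_ae (Filter.Eventually.of_forall (fun z => ?_))
  refine MeasureTheory.setLIntegral_congr_fun_ae measurableSet_Ioi
    (Filter.Eventually.of_forall (fun r hr => ?_))
  have hr0 : (0:ℝ) < r := hr
  rw [Phi_slice hnoθ (ne_of_gt hr0) z]
  rw [ENNReal.ofReal_mul (by positivity)]
  ring



end Aux

/-- Let `F = F_r e_r + F_z e_z` be a `C¹` axisymmetric,
divergence-free vector field on `ℝ³` belonging to `L²(ℝ³;ℝ³)`. Then there is an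
axisymmetric `B_θ ∈ V¹` with `F_r = −∂_z B_θ`, `F_z = (1/r)∂_r(r B_θ)`, and
`‖B_θ‖²_{V¹} = ‖F‖²_{L²(ℝ³)}`. -/
theorem divergence_free_field_is_curl_of_Btheta (F : ℝ × ℝ × ℝ → ℝ × ℝ × ℝ)
    (hC1 : ContDiff ℝ 1 F)
    -- `F` is axisymmetric (equivariant under rotations about the `z`-axis):
    (haxi : ∀ φ x, F (rot φ x) = rot φ (F x))
    -- `F` has no `e_θ` component:
    (hnoθ : ∀ x : ℝ × ℝ × ℝ, - x.2.1 * (F x).1 + x.1 * (F x).2.1 = 0)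
    -- `F ∈ L²(ℝ³;ℝ³)`:
    (hL2 : Integrable (fun x : ℝ × ℝ × ℝ =>
      (F x).1 ^ 2 + (F x).2.1 ^ 2 + (F x).2.2 ^ 2))
    -- `F` is divergence free, `(1/r)∂_r(rF_r) + ∂_z F_z = 0`:
    (hdiv : ∀ x : ℝ × ℝ × ℝ,
      (fderiv ℝ F x (1, 0, 0)).1 + (fderiv ℝ F x (0, 1, 0)).2.1
        + (fderiv ℝ F x (0, 0, 1)).2.2 = 0) :
    ∃ Bθ g₁ g₂ : ℝ × ℝ → ℝ, IsV1 Bθ g₁ g₂ ∧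
      -- `F_r = −∂_z B_θ` and `F_z = (1/r)∂_r(r B_θ)` (in the weak sense, with
      -- `F_r(r,z) = F(r,0,z)·e_r`, `F_z(r,z) = F(r,0,z)·e_z`):
      (∀ᵐ p ∂(volume.restrict halfPlane),
        g₂ p = - (F (p.1, 0, p.2)).1 ∧ g₁ p = (F (p.1, 0, p.2)).2.2) ∧
      -- `‖B_θ‖²_{V¹} = ‖F‖²_{L²(ℝ³)}`:
      V1normSq g₁ g₂ = ∫ x : ℝ × ℝ × ℝ,
        ((F x).1 ^ 2 + (F x).2.1 ^ 2 + (F x).2.2 ^ 2) := by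

  have hf1 : Continuous (f1 F) := cont_f1 hC1
  have hf3 : Continuous (f3 F) := cont_f3 hC1
  have hAA : Continuous (AA F) := cont_AA hC1
  have hPhic : Continuous (PhiF F) := by
    have := hC1.continuous
    unfold PhiF; fun_prop
  set G : ℝ × ℝ → ℝ := fun p => (f3 F p ^ 2 + (- f1 F p) ^ 2) * p.1 with hG
  have hGc : Continuous G := by fun_prop
  have hGae : 0 ≤ᵐ[volume.restrict halfPlane] G := by
    refine (MeasureTheory.ae_restrict_iff' measurableSet_halfPlane).2
      (Filter.Eventually.of_forall (fun p hp => ?_))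
    have h1 : (0:ℝ) < p.1 := hp.1
    simp only [hG]
    positivity
  set Ihp : ENNReal := ∫⁻ p in halfPlane, ENNReal.ofReal (G p) with hIhp
  set I3d : ENNReal := ∫⁻ x : ℝ × ℝ × ℝ, ENNReal.ofReal (PhiF F x) with hI3d
  have hmul : I3d = ENNReal.ofReal (2 * π) * Ihp := by
    calc I3d = ∫⁻ z : ℝ, ∫⁻ r in Ioi (0:ℝ),
          ENNReal.ofReal (2 * π) * (ENNReal.ofReal r * ENNReal.ofReal (PhiF F (r, 0, z))) :=
          lintegral_3d_eq hC1 haxi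
      _ = ∫⁻ z : ℝ, ENNReal.ofReal (2 * π) * ∫⁻ r in Ioi (0:ℝ),
          ENNReal.ofReal r * ENNReal.ofReal (PhiF F (r, 0, z)) :=
          MeasureTheory.lintegral_congr fun z =>
            MeasureTheory.lintegral_const_mul' _ _ ENNReal.ofReal_ne_top
      _ = ENNReal.ofReal (2 * π) * ∫⁻ z : ℝ, ∫⁻ r in Ioi (0:ℝ),
          ENNReal.ofReal r * ENNReal.ofReal (PhiF F (r, 0, z)) :=
          MeasureTheory.lintegral_const_mul' _ _ ENNReal.ofReal_ne_top
      _ = ENNReal.ofReal (2 * π) * Ihp := by rw [hIhp, lintegral_hp_eq hC1 hnoθ]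
  have hL2' : Integrable (PhiF F) volume := hL2
  have h3d_lt : I3d < ⊤ := by
    have h := hL2'.hasFiniteIntegral
    rw [MeasureTheory.hasFiniteIntegral_iff_ofReal
      (Filter.Eventually.of_forall (fun x => by unfold PhiF; positivity))] at h
    exact h
  have hIhp_lt : Ihp < ⊤ := by
    rcases eq_top_or_lt_top Ihp with htop | hlt
    · exfalso
      rw [htop, ENNReal.mul_top (by
        simp only [ne_eq, ENNReal.ofReal_eq_zero, not_le]
        positivity)] at hmul
      rw [hmul] at h3d_lt
      exact absurd h3d_lt (lt_irrefl ⊤)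
    · exact hlt
  have hIntG : IntegrableOn G halfPlane volume := by
    refine ⟨hGc.aestronglyMeasurable.restrict, ?_⟩
    rw [MeasureTheory.hasFiniteIntegral_iff_ofReal hGae]
    exact hIhp_lt
  refine ⟨Bt F, f3 F, fun p => - f1 F p, ⟨?_, hf3.aestronglyMeasurable,
    hf1.neg.aestronglyMeasurable, ?_, hIntG, ?_⟩, ?_, ?_⟩
  · exact ((hAA.measurable).div measurable_fst).aestronglyMeasurable
  · -- local integrability of Bt * r
    intro x hx
    have hopen : IsOpen halfPlane := isOpen_Ioi.prod isOpen_univ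
    obtain ⟨ε, hε, hball⟩ := Metric.isOpen_iff.1 hopen x hx
    refine ⟨Metric.closedBall x (ε/2), nhdsWithin_le_nhds
      (Metric.closedBall_mem_nhds x (by linarith)), ?_⟩
    have hsub : Metric.closedBall x (ε/2) ⊆ halfPlane :=
      (Metric.closedBall_subset_ball (by linarith)).trans hball
    refine MeasureTheory.IntegrableOn.congr_fun
      (hAA.continuousOn.integrableOn_compact (isCompact_closedBall x (ε/2)))
      (fun p hp => ?_) measurableSet_closedBall
    have hp1 : (0:ℝ) < p.1 := (hsub hp).1
    simp only [Bt]
    field_simp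
  · intro θ hθ
    exact ⟨weak_r hC1 hθ, weak_z hC1 haxi hnoθ hdiv hθ⟩
  · exact Filter.Eventually.of_forall fun p => ⟨rfl, rfl⟩
  · -- norm identity
    have e_hp : (∫ p in halfPlane, G p) = Ihp.toReal :=
      MeasureTheory.integral_eq_lintegral_of_nonneg_ae hGae hGc.aestronglyMeasurable.restrict
    have e_3d : (∫ x : ℝ × ℝ × ℝ, PhiF F x) = I3d.toReal :=
      MeasureTheory.integral_eq_lintegral_of_nonneg_ae
        (Filter.Eventually.of_forall (fun x => by unfold PhiF; positivity))
        hPhic.aestronglyMeasurable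
    show (2 * π) * (∫ p in halfPlane, (f3 F p ^ 2 + (- f1 F p) ^ 2) * p.1) = _
    calc (2 * π) * (∫ p in halfPlane, (f3 F p ^ 2 + (- f1 F p) ^ 2) * p.1)
        = (2 * π) * Ihp.toReal := by rw [← e_hp]
      _ = (ENNReal.ofReal (2 * π) * Ihp).toReal := by
          rw [ENNReal.toReal_mul, ENNReal.toReal_ofReal (by positivity)]
      _ = I3d.toReal := by rw [← hmul]
      _ = ∫ x : ℝ × ℝ × ℝ, PhiF F x := e_3d.symm
      _ = _ := rfl

end VM3
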